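/- arXiv:1702.00549 — 3 statements merged into one kernel-verified Lean document; each statement's English description precedes it below -/
import Mathlib

section
/- Let q be a prime power and let V be a t-dimensional vector space over F_q, where t ≥ 2 is even, equipped with a non-degenerate alternating bilinear form B. Then for every integer k with 1 ≤ k ≤ t−1, the number of k-dimensional F_q-subspaces W of V satisfying W ∩ W^⊥ = {0} equals 0 if k is odd, and equals q^{k(t−k)/2} [t/2, k/2]_{q²} if k is even. -/
/-- Gaussian binomial coefficient with rational base `Q`:
`[a, b]_Q = ∏_{i=0}^{b-1} (Q^a - Q^i)/(Q^b - Q^i)`. -/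
def gbinom (Q : ℚ) (a b : ℕ) : ℚ :=
  ∏ i ∈ Finset.range b, (Q ^ a - Q ^ i) / (Q ^ b - Q ^ i)

/-!
Count the symplectic families `(e₁, f₁, …, e_m, f_m)`, i.e. `B eᵢ fⱼ = δᵢⱼ` and
`B eᵢ eⱼ = B fᵢ fⱼ = 0`, in two ways. Choosing one hyperbolic pair at a time inside the
orthogonal complement of the previous ones, which is again nondegenerate and two dimensions
smaller, gives `∏_{i<m} (q^(t-2i) - 1) q^(t-2i-1)` families. On the other hand every family spans
a nondegenerate `2m`-dimensional subspace `W`, and each such `W` carries as many families as any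
nondegenerate space of dimension `2m`. Dividing the two counts gives `q^(m(t-2m)) [t/2, m]_{q²}`.
Splitting off hyperbolic pairs also shows that nondegenerate alternating spaces have even
dimension, so there are no nondegenerate subspaces of odd dimension.
-/

open Module Submodule LinearMap LinearMap.BilinForm Finset

/-- `eᵢ` runs over the nonzero vectors of a `(d - 2i)`-dimensional space, `fᵢ` over an affine
hyperplane in it. -/
def symplecticFamilyCount (q d m : ℕ) : ℕ :=
  ∏ i ∈ range m, (q ^ (d - 2 * i) - 1) * q ^ (d - 2 * i - 1)

theorem symplecticFamilyCount_ne_zero {q d m : ℕ} (hq : 1 < q) (hm : 2 * m ≤ d) :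
    symplecticFamilyCount q d m ≠ 0 :=
  prod_ne_zero_iff.mpr fun i hi ↦ mul_ne_zero
    (Nat.sub_ne_zero_of_lt (Nat.one_lt_pow (by have := mem_range.mp hi; omega) hq))
    (pow_ne_zero _ (by omega))

theorem cast_symplecticFamilyCount_two_mul {q : ℕ} (hq : 1 < q) {m n : ℕ} (hmn : m ≤ n) :
    (symplecticFamilyCount q (2 * n) m : ℚ) =
      (q : ℚ) ^ (2 * m * (n - m)) * gbinom ((q : ℚ) ^ 2) n m *
        symplecticFamilyCount q (2 * m) m := by
  obtain ⟨r, rfl⟩ := Nat.exists_eq_add_of_le hmn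
  have hq2 : (1 : ℚ) < (q : ℚ) ^ 2 := one_lt_pow₀ (by exact_mod_cast hq) two_ne_zero
  have hfactor : ∀ i ∈ range m,
      (((q ^ (2 * (m + r) - 2 * i) - 1) * q ^ (2 * (m + r) - 2 * i - 1) : ℕ) : ℚ) =
        (q : ℚ) ^ (2 * r) * ((((q : ℚ) ^ 2) ^ (m + r) - ((q : ℚ) ^ 2) ^ i) /
          (((q : ℚ) ^ 2) ^ m - ((q : ℚ) ^ 2) ^ i)) *
        (((q ^ (2 * m - 2 * i) - 1) * q ^ (2 * m - 2 * i - 1) : ℕ) : ℚ) := by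
    intro i hi
    obtain ⟨j, rfl⟩ := Nat.exists_eq_add_of_lt (mem_range.mp hi)
    have hden : ((q : ℚ) ^ 2) ^ (i + j + 1) - ((q : ℚ) ^ 2) ^ i ≠ 0 :=
      sub_ne_zero.mpr (pow_lt_pow_right₀ hq2 (by omega)).ne'
    rw [show 2 * (i + j + 1 + r) - 2 * i - 1 = 2 * (j + r) + 1 by omega,
      show 2 * (i + j + 1 + r) - 2 * i = 2 * (j + r + 1) by omega,
      show 2 * (i + j + 1) - 2 * i - 1 = 2 * j + 1 by omega,
      show 2 * (i + j + 1) - 2 * i = 2 * (j + 1) by omega]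
    push_cast [Nat.one_le_pow _ _ (by omega : 0 < q)]
    field_simp
    ring
  rw [symplecticFamilyCount, symplecticFamilyCount, gbinom, Nat.cast_prod,
    prod_congr rfl hfactor, prod_mul_distrib, prod_mul_distrib, prod_const, card_range,
    Nat.cast_prod, Nat.add_sub_cancel_left, ← pow_mul, mul_right_comm 2 r m]

theorem LinearMap.natCard_setOf_apply_eq_one {K V : Type*} [Field K] [AddCommGroup V]
    [Module K V] [FiniteDimensional K V] {φ : V →ₗ[K] K} (hφ : φ ≠ 0) :
    Nat.card {v // φ v = 1} = Nat.card K ^ (finrank K V - 1) := by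
  calc Nat.card {v // φ v = 1} = Nat.card (ker φ) :=
        Nat.card_congr <|
          φ.toAddMonoidHom.fiberEquivKerOfSurjective (φ.surjective_of_ne_zero hφ) 1
    _ = Nat.card K ^ (finrank K V - 1) := by
        rw [Module.natCard_eq_pow_finrank (K := K),
          ← Module.Dual.finrank_ker_add_one_of_ne_zero hφ, Nat.add_sub_cancel]

namespace LinearMap.BilinForm

variable {K V : Type*} [Field K] [AddCommGroup V] [Module K V] {B : LinearMap.BilinForm K V}

theorem restrict_nondegenerate_iff (hB : B.IsRefl) (W : Submodule K V) :
    (B.restrict W).Nondegenerate ↔ ∀ v ∈ W, (∀ w ∈ W, B v w = 0) → v = 0 := by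
  refine (IsRefl.nondegenerate_iff_separatingLeft (B := B.restrict W) fun x y ↦ hB x y).trans
    ⟨fun h v hv hvW ↦ congrArg Subtype.val (h ⟨v, hv⟩ fun w ↦ hvW w w.2),
      fun h v hv ↦ Subtype.ext (h v v.2 fun w hw ↦ hv ⟨w, hw⟩)⟩

theorem restrict_orthogonal_nondegenerate [FiniteDimensional K V] (hnd : B.Nondegenerate)
    (hB : B.IsRefl) {W : Submodule K V} (hW : (B.restrict W).Nondegenerate) :
    (B.restrict (B.orthogonal W)).Nondegenerate := by
  refine B.nondegenerate_restrict_of_disjoint_orthogonal hB ?_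
  rw [orthogonal_orthogonal hnd hB]
  exact (isCompl_orthogonal_of_restrict_nondegenerate hB hW).disjoint.symm

theorem mem_orthogonal_span_iff {s : Set V} {x : V} :
    x ∈ B.orthogonal (span K s) ↔ ∀ y ∈ s, B y x = 0 :=
  span_le (p := ker (B.flip x))

theorem exists_apply_eq_one (hB : B.SeparatingLeft) {a : V} (ha : a ≠ 0) : ∃ b, B a b = 1 := by
  obtain ⟨w, hw⟩ : ∃ w, B a w ≠ 0 := by
    by_contra! h
    exact ha (hB a h)
  exact ⟨(B a w)⁻¹ • w, by rw [map_smul, smul_eq_mul, inv_mul_cancel₀ hw]⟩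

structure IsSymplecticFamily {ι : Type*} [DecidableEq ι] (B : LinearMap.BilinForm K V)
    (e f : ι → V) : Prop where
  left : ∀ i j, B (e i) (e j) = 0
  right : ∀ i j, B (f i) (f j) = 0
  pair : ∀ i j, B (e i) (f j) = if i = j then 1 else 0

namespace IsSymplecticFamily

variable {ι : Type*} [DecidableEq ι] {e f : ι → V}

theorem comp (h : IsSymplecticFamily B e f) {κ : Type*} [DecidableEq κ] {σ : κ → ι}
    (hσ : Function.Injective σ) : IsSymplecticFamily B (e ∘ σ) (f ∘ σ) :=
  ⟨fun i j ↦ h.left _ _, fun i j ↦ h.right _ _, fun i j ↦ by simp [h.pair, hσ.eq_iff]⟩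

variable [Fintype ι]

theorem apply_sum_right (h : IsSymplecticFamily B e f) (c : ι ⊕ ι → K) (j : ι) :
    B (∑ s, c s • Sum.elim e f s) (f j) = c (.inl j) := by
  simp [Fintype.sum_sum_type, h.pair, h.right]

theorem apply_sum_left (h : IsSymplecticFamily B e f) (c : ι ⊕ ι → K) (j : ι) :
    B (e j) (∑ s, c s • Sum.elim e f s) = c (.inr j) := by
  simp [Fintype.sum_sum_type, h.pair, h.left]

theorem linearIndependent (h : IsSymplecticFamily B e f) :
    LinearIndependent K (Sum.elim e f) := by
  refine Fintype.linearIndependent_iff.mpr fun c hc ↦ ?_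
  rintro (j | j)
  · simpa [hc] using (h.apply_sum_right c j).symm
  · simpa [hc] using (h.apply_sum_left c j).symm

theorem finrank_span (h : IsSymplecticFamily B e f) :
    finrank K (span K (Set.range (Sum.elim e f))) = 2 * Fintype.card ι := by
  rw [finrank_span_eq_card h.linearIndependent, Fintype.card_sum, two_mul]

theorem restrict_span_nondegenerate (h : IsSymplecticFamily B e f) (hB : B.IsRefl) :
    (B.restrict (span K (Set.range (Sum.elim e f)))).Nondegenerate := by
  refine B.nondegenerate_restrict_of_disjoint_orthogonal hB (disjoint_def.mpr fun v hv hv' ↦ ?_)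
  obtain ⟨c, rfl⟩ := (mem_span_range_iff_exists_fun K).mp hv
  rw [mem_orthogonal_span_iff] at hv'
  have hc : c = 0 := by
    ext (j | j)
    · rw [← h.apply_sum_right c j]
      exact hB _ _ (hv' _ ⟨.inr j, rfl⟩)
    · rw [← h.apply_sum_left c j]
      exact hv' _ ⟨.inl j, rfl⟩
  simp [hc]

theorem cons {m : ℕ} {e f : Fin m → V} (h : IsSymplecticFamily B e f) (hB : B.IsAlt)
    {a b : V} (hab : B a b = 1) (ha : a ∈ B.orthogonal (span K (Set.range (Sum.elim e f))))
    (hb : b ∈ B.orthogonal (span K (Set.range (Sum.elim e f)))) :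
    IsSymplecticFamily B (Fin.cons a e : Fin (m + 1) → V) (Fin.cons b f) := by
  rw [mem_orthogonal_span_iff] at ha hb
  have hea i : B (e i) a = 0 := ha _ ⟨.inl i, rfl⟩
  have hfa i : B (f i) a = 0 := ha _ ⟨.inr i, rfl⟩
  have heb i : B (e i) b = 0 := hb _ ⟨.inl i, rfl⟩
  have hfb i : B (f i) b = 0 := hb _ ⟨.inr i, rfl⟩
  refine ⟨fun i j ↦ ?_, fun i j ↦ ?_, fun i j ↦ ?_⟩ <;> cases i using Fin.cases <;>
    cases j using Fin.cases <;>
    simp [hB a, hB b, hab, hea, heb, hfb, hB.eq_iff.mp (hea _), hB.eq_iff.mp (hfa _),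
      hB.eq_iff.mp (hfb _), h.left, h.right, h.pair, Fin.succ_ne_zero, (Fin.succ_ne_zero _).symm]

theorem head_mem_orthogonal_tail {m : ℕ} {e f : Fin (m + 1) → V} (h : IsSymplecticFamily B e f)
    (hB : B.IsAlt) :
    e 0 ∈ B.orthogonal (span K (Set.range (Sum.elim (Fin.tail e) (Fin.tail f)))) ∧
      f 0 ∈ B.orthogonal (span K (Set.range (Sum.elim (Fin.tail e) (Fin.tail f)))) := by
  simp only [mem_orthogonal_span_iff, Set.forall_mem_range, Sum.forall, Sum.elim_inl,
    Sum.elim_inr, Fin.tail]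
  refine ⟨⟨fun i ↦ h.left _ _, fun i ↦ hB.eq_iff.mp ?_⟩, ⟨fun i ↦ ?_, fun i ↦ h.right _ _⟩⟩
  · simp [h.pair, (Fin.succ_ne_zero i).symm]
  · simp [h.pair, Fin.succ_ne_zero i]

end IsSymplecticFamily

theorem even_finrank_of_isAlt_of_nondegenerate [FiniteDimensional K V] (hB : B.IsAlt)
    (hnd : B.Nondegenerate) :
    Even (finrank K V) := by
  obtain ⟨n, hn⟩ : ∃ n, finrank K V = n := ⟨_, rfl⟩
  induction n using Nat.strong_induction_on generalizing V with
  | _ n ih =>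
  rcases n.eq_zero_or_pos with rfl | hpos
  · exact hn ▸ ⟨0, rfl⟩
  obtain ⟨a, ha⟩ := finrank_pos_iff_exists_ne_zero.mp (hn ▸ hpos)
  obtain ⟨b, hab⟩ := exists_apply_eq_one hnd.1 ha
  have hfam : IsSymplecticFamily B ![a] ![b] := ⟨by simp [hB a], by simp [hB b], by simp [hab]⟩
  have hU := hfam.restrict_span_nondegenerate hB.isRefl
  have h2 : 2 ≤ n := by
    simpa [hfam.finrank_span, hn] using finrank_le (span K (Set.range (Sum.elim ![a] ![b])))
  have hdim : finrank K (B.orthogonal (span K (Set.range (Sum.elim ![a] ![b])))) = n - 2 := by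
    rw [finrank_orthogonal hnd, hfam.finrank_span, hn]; rfl
  obtain ⟨r, hr⟩ := ih (n - 2) (by omega) (B := B.restrict (B.orthogonal _)) (fun x ↦ hB x)
    (restrict_orthogonal_nondegenerate hnd hB.isRefl hU) hdim
  exact hn ▸ ⟨r + 1, by omega⟩

abbrev HyperbolicPair (B : LinearMap.BilinForm K V) : Type _ := {p : V × V // B p.1 p.2 = 1}

abbrev SymplecticFamily (B : LinearMap.BilinForm K V) (m : ℕ) : Type _ :=
  {p : (Fin m → V) × (Fin m → V) // IsSymplecticFamily B p.1 p.2}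

namespace SymplecticFamily

variable {m : ℕ}

def span (s : SymplecticFamily B m) : Submodule K V :=
  Submodule.span K (Set.range (Sum.elim s.1.1 s.1.2))

theorem finrank_span (s : SymplecticFamily B m) : finrank K s.span = 2 * m := by
  rw [span, s.2.finrank_span, Fintype.card_fin]

theorem restrict_span_nondegenerate (hB : B.IsRefl) (s : SymplecticFamily B m) :
    (B.restrict s.span).Nondegenerate :=
  s.2.restrict_span_nondegenerate hB

def succEquiv (hB : B.IsAlt) (m : ℕ) :
    SymplecticFamily B (m + 1) ≃
      Σ s : SymplecticFamily B m, HyperbolicPair (B.restrict (B.orthogonal s.span)) where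
  toFun s :=
    ⟨⟨(Fin.tail s.1.1, Fin.tail s.1.2), s.2.comp (Fin.succ_injective _)⟩,
      ⟨(⟨s.1.1 0, (s.2.head_mem_orthogonal_tail hB).1⟩,
        ⟨s.1.2 0, (s.2.head_mem_orthogonal_tail hB).2⟩), by simpa using s.2.pair 0 0⟩⟩
  invFun x :=
    ⟨(Fin.cons x.2.1.1 x.1.1.1, Fin.cons x.2.1.2 x.1.1.2),
      x.1.2.cons hB x.2.2 x.2.1.1.2 x.2.1.2.2⟩
  left_inv s := Subtype.ext (Prod.ext (Fin.cons_self_tail _) (Fin.cons_self_tail _))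
  right_inv x := rfl

def restrictEquiv [FiniteDimensional K V] (W : Submodule K V) (hW : finrank K W = 2 * m) :
    {s : SymplecticFamily B m // s.span = W} ≃ SymplecticFamily (B.restrict W) m where
  toFun s :=
    ⟨(fun i ↦ ⟨s.1.1.1 i, s.2.le (subset_span ⟨.inl i, rfl⟩)⟩,
      fun i ↦ ⟨s.1.1.2 i, s.2.le (subset_span ⟨.inr i, rfl⟩)⟩),
      ⟨s.1.2.left, s.1.2.right, s.1.2.pair⟩⟩
  invFun s :=
    have h : IsSymplecticFamily B (fun i ↦ (s.1.1 i : V)) (fun i ↦ s.1.2 i) :=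
      ⟨s.2.left, s.2.right, s.2.pair⟩
    ⟨⟨(fun i ↦ s.1.1 i, fun i ↦ s.1.2 i), h⟩, by
      refine eq_of_le_of_finrank_le (span_le.mpr ?_) (by rw [hW, span, h.finrank_span,
        Fintype.card_fin])
      rintro _ ⟨i | i, rfl⟩ <;> simp⟩
  left_inv s := rfl
  right_inv s := rfl

end SymplecticFamily

section Counting

variable [Finite K]

theorem natCard_hyperbolicPair [FiniteDimensional K V] (hB : B.SeparatingLeft) :
    Nat.card (HyperbolicPair B) =
      (Nat.card K ^ finrank K V - 1) * Nat.card K ^ (finrank K V - 1) := by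
  classical
  have : Finite V := Module.finite_of_finite K
  have := Fintype.ofFinite V
  have hfiber (a : V) :
      Nat.card {b // B a b = 1} = if a = 0 then 0 else Nat.card K ^ (finrank K V - 1) := by
    split_ifs with ha
    · simp [ha]
    · exact natCard_setOf_apply_eq_one fun h ↦ ha (hB a fun b ↦ by simp [h])
  rw [Nat.card_congr (Equiv.subtypeProdEquivSigmaSubtype fun a b ↦ B a b = 1), Nat.card_sigma]
  simp only [hfiber, sum_ite, sum_const_zero, sum_const, zero_add, smul_eq_mul, filter_ne',
    mem_univ, card_erase_of_mem, card_univ]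
  rw [← Nat.card_eq_fintype_card, Module.natCard_eq_pow_finrank (K := K)]

theorem natCard_symplecticFamily [FiniteDimensional K V] (hB : B.IsAlt) (hnd : B.Nondegenerate)
    (m : ℕ) :
    Nat.card (SymplecticFamily B m) = symplecticFamilyCount (Nat.card K) (finrank K V) m := by
  have : Finite V := Module.finite_of_finite K
  induction m with
  | zero =>
    refine Nat.card_eq_one_iff_unique.mpr ⟨inferInstance, ⟨⟨(finZeroElim, finZeroElim), ?_⟩⟩⟩
    exact ⟨finZeroElim, finZeroElim, finZeroElim⟩
  | succ m ih =>
    have := Fintype.ofFinite (SymplecticFamily B m)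
    have hpairs (s : SymplecticFamily B m) :
        Nat.card (HyperbolicPair (B.restrict (B.orthogonal s.span))) =
          (Nat.card K ^ (finrank K V - 2 * m) - 1) *
            Nat.card K ^ (finrank K V - 2 * m - 1) := by
      have hs := restrict_orthogonal_nondegenerate hnd hB.isRefl
        (s.restrict_span_nondegenerate hB.isRefl)
      rw [natCard_hyperbolicPair hs.1, finrank_orthogonal hnd, s.finrank_span]
    rw [Nat.card_congr (SymplecticFamily.succEquiv hB m), Nat.card_sigma,
      sum_congr rfl fun s _ ↦ hpairs s, sum_const, card_univ, ← Nat.card_eq_fintype_card, ih,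
      smul_eq_mul, symplecticFamilyCount, symplecticFamilyCount, prod_range_succ]

theorem natCard_nondegenerate_subspace_mul [FiniteDimensional K V] (hB : B.IsAlt)
    (hnd : B.Nondegenerate) (m : ℕ) :
    Nat.card {W : Submodule K V // finrank K W = 2 * m ∧ (B.restrict W).Nondegenerate} *
        symplecticFamilyCount (Nat.card K) (2 * m) m =
      symplecticFamilyCount (Nat.card K) (finrank K V) m := by
  have : Finite V := Module.finite_of_finite K
  have := Fintype.ofFinite
    {W : Submodule K V // finrank K W = 2 * m ∧ (B.restrict W).Nondegenerate}
  let toSubspace (s : SymplecticFamily B m) :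
      {W : Submodule K V // finrank K W = 2 * m ∧ (B.restrict W).Nondegenerate} :=
    ⟨s.span, s.finrank_span, s.restrict_span_nondegenerate hB.isRefl⟩
  have hfiber W :
      Nat.card {s // toSubspace s = W} = symplecticFamilyCount (Nat.card K) (2 * m) m := by
    rw [Nat.card_congr ((Equiv.subtypeEquivRight fun s ↦ Subtype.ext_iff).trans
      (SymplecticFamily.restrictEquiv W.1 W.2.1)),
      natCard_symplecticFamily (B := B.restrict W.1) (fun x ↦ hB x) W.2.2, W.2.1]
  rw [← natCard_symplecticFamily hB hnd, ← Nat.card_congr (Equiv.sigmaFiberEquiv toSubspace),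
    Nat.card_sigma, sum_congr rfl fun W _ ↦ hfiber W, sum_const, card_univ, smul_eq_mul,
    Nat.card_eq_fintype_card]

end Counting

end LinearMap.BilinForm

theorem count_nondegenerate_subspaces_symplectic_fixed_dim_general
    (q t : ℕ) (hteven : Even t)
    (F : Type) [Field F] [Fintype F] (hF : Fintype.card F = q)
    (V : Type) [AddCommGroup V] [Module F V] [FiniteDimensional F V]
    (hdim : Module.finrank F V = t)
    (B : LinearMap.BilinForm F V)
    (halt : ∀ v : V, B v v = 0)
    (hnd : ∀ v : V, (∀ w : V, B v w = 0) → v = 0)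
    (k : ℕ) (hk2 : k ≤ t - 1) :
    (Odd k →
      Nat.card {W : Submodule F V //
        Module.finrank F W = k ∧ ∀ v ∈ W, (∀ w ∈ W, B v w = 0) → v = 0} = 0) ∧
    (Even k →
      (Nat.card {W : Submodule F V //
        Module.finrank F W = k ∧ ∀ v ∈ W, (∀ w ∈ W, B v w = 0) → v = 0} : ℚ) =
        (q : ℚ) ^ (k * (t - k) / 2) * gbinom ((q : ℚ) ^ 2) (t / 2) (k / 2)) := by
  have hB : B.IsAlt := halt
  have hBnd : B.Nondegenerate := hB.isRefl.nondegenerate_iff_separatingLeft.mpr hnd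
  simp_rw [← restrict_nondegenerate_iff hB.isRefl]
  refine ⟨fun hk ↦ Nat.card_eq_zero.mpr (.inl ⟨fun ⟨W, hW, hWnd⟩ ↦ ?_⟩), fun ⟨m, hk⟩ ↦ ?_⟩
  · exact Nat.not_even_iff_odd.mpr hk
      (hW ▸ even_finrank_of_isAlt_of_nondegenerate (fun x ↦ halt x) hWnd)
  obtain ⟨n, hn⟩ := hteven
  obtain rfl : t = 2 * n := by omega
  obtain rfl : k = 2 * m := by omega
  subst hF
  have hq : 1 < Nat.card F := Finite.one_lt_card
  have key := natCard_nondegenerate_subspace_mul hB hBnd m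
  rw [hdim, ← Nat.cast_inj (R := ℚ), Nat.cast_mul,
    cast_symplecticFamilyCount_two_mul hq (n := n) (by omega)] at key
  have hexp : 2 * m * (2 * n - 2 * m) / 2 = 2 * m * (n - m) := by
    rw [← Nat.mul_sub, mul_left_comm, Nat.mul_div_cancel_left _ two_pos]
  rw [hexp, Nat.mul_div_cancel_left _ two_pos, Nat.mul_div_cancel_left _ two_pos,
    ← Nat.card_eq_fintype_card]
  exact mul_right_cancel₀ (Nat.cast_ne_zero.mpr (symplecticFamilyCount_ne_zero hq le_rfl)) key

/-- number of `k`-dimensional non-degenerate subspaces of a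
non-degenerate symplectic (alternating) space of even dimension `t` over `F_q`. -/
theorem count_nondegenerate_subspaces_symplectic_fixed_dim
    (q t : ℕ) (hq : IsPrimePow q) (ht : 2 ≤ t) (hteven : Even t)
    (F : Type) [Field F] [Fintype F] (hF : Fintype.card F = q)
    (V : Type) [AddCommGroup V] [Module F V] [FiniteDimensional F V]
    (hdim : Module.finrank F V = t)
    (B : LinearMap.BilinForm F V)
    (halt : ∀ v : V, B v v = 0)
    (hnd : ∀ v : V, (∀ w : V, B v w = 0) → v = 0)
    (k : ℕ) (hk1 : 1 ≤ k) (hk2 : k ≤ t - 1) :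
    (Odd k →
      Nat.card {W : Submodule F V //
        Module.finrank F W = k ∧ ∀ v ∈ W, (∀ w ∈ W, B v w = 0) → v = 0} = 0) ∧
    (Even k →
      (Nat.card {W : Submodule F V //
        Module.finrank F W = k ∧ ∀ v ∈ W, (∀ w ∈ W, B v w = 0) → v = 0} : ℚ) =
        (q : ℚ) ^ (k * (t - k) / 2) * gbinom ((q : ℚ) ^ 2) (t / 2) (k / 2)) :=
  count_nondegenerate_subspaces_symplectic_fixed_dim_general q t hteven F hF V hdim B halt hnd k hk2
end

section
/- Let q be an odd prime power and let λ, μ be positive integers with μ ≤ λ, such that either q ≡ 3 (mod 4) and λ is even, or q ≡ 1 (mod 4). Then both of the rational numbers ((q^μ+1)(q^{λ−μ}−1) / (2(q^λ−1))) · [λ, μ]_{q²} and ((q^μ−1)(q^{λ−μ}+1) / (2(q^λ−1))) · [λ, μ]_{q²} are integers. -/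
open Finset

def qFactorial (Q : ℚ) (n : ℕ) : ℚ := ∏ i ∈ range n, (Q ^ (i + 1) - 1)

theorem qFactorial_zero (Q : ℚ) : qFactorial Q 0 = 1 :=
  prod_range_zero _

theorem qFactorial_succ (Q : ℚ) (n : ℕ) :
    qFactorial Q (n + 1) = qFactorial Q n * (Q ^ (n + 1) - 1) :=
  prod_range_succ _ _

theorem qFactorial_add (Q : ℚ) (k m : ℕ) :
    qFactorial Q (k + m) = qFactorial Q k * ∏ i ∈ range m, (Q ^ (k + (i + 1)) - 1) :=
  prod_range_add _ _ _

theorem pow_sub_one_ne_zero_of_one_lt {x : ℚ} (hx : 1 < x) {n : ℕ} (hn : n ≠ 0) :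
    x ^ n - 1 ≠ 0 :=
  sub_ne_zero.mpr (one_lt_pow₀ hx hn).ne'

theorem qFactorial_ne_zero {Q : ℚ} (hQ : 1 < Q) (n : ℕ) : qFactorial Q n ≠ 0 :=
  prod_ne_zero_iff.mpr fun i _ ↦ pow_sub_one_ne_zero_of_one_lt hQ i.succ_ne_zero

theorem gbinom_add_eq_qFactorial_div {Q : ℚ} (hQ : 1 < Q) (m k : ℕ) :
    gbinom Q (m + k) m = qFactorial Q (m + k) / (qFactorial Q m * qFactorial Q k) := by
  have hterm : ∀ i ∈ range m, (Q ^ (m + k) - Q ^ i) / (Q ^ m - Q ^ i)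
      = (Q ^ (k + (m - 1 - i + 1)) - 1) / (Q ^ (m - 1 - i + 1) - 1) := by
    intro i hi
    have hi : i < m := mem_range.mp hi
    obtain ⟨j, rfl⟩ : ∃ j, m = i + j + 1 := ⟨m - i - 1, by omega⟩
    have hj : i + j + 1 - 1 - i + 1 = j + 1 := by omega
    rw [hj, show Q ^ (i + j + 1 + k) - Q ^ i = Q ^ i * (Q ^ (k + (j + 1)) - 1) by ring,
      show Q ^ (i + j + 1) - Q ^ i = Q ^ i * (Q ^ (j + 1) - 1) by ring,
      mul_div_mul_left _ _ (pow_ne_zero i (by positivity))]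
  rw [gbinom, prod_congr rfl hterm,
    prod_range_reflect (fun j ↦ (Q ^ (k + (j + 1)) - 1) / (Q ^ (j + 1) - 1)) m,
    prod_div_distrib, ← qFactorial, add_comm m k, qFactorial_add, mul_comm (qFactorial Q m),
    mul_div_mul_left _ _ (qFactorial_ne_zero hQ k)]

theorem gbinom_self {Q : ℚ} (hQ : 1 < Q) (n : ℕ) : gbinom Q n n = 1 := by
  have h := gbinom_add_eq_qFactorial_div hQ n 0
  rwa [add_zero, qFactorial_zero, mul_one, div_self (qFactorial_ne_zero hQ n)] at h

section
variable {Q : ℚ} (hQ : 1 < Q) (m k : ℕ)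
include hQ

theorem gbinom_add_succ_succ :
    gbinom Q (m + 1 + (k + 1)) (m + 1)
      = gbinom Q (m + (k + 1)) m + Q ^ (m + 1) * gbinom Q (m + 1 + k) (m + 1) := by
  simp only [gbinom_add_eq_qFactorial_div hQ]
  simp only [show m + 1 + (k + 1) = m + k + 1 + 1 by ring, show m + 1 + k = m + k + 1 by ring,
    show m + (k + 1) = m + k + 1 by ring]
  rw [qFactorial_succ Q (m + k + 1), qFactorial_succ Q m, qFactorial_succ Q k]
  have hm := qFactorial_ne_zero hQ m
  have hk := qFactorial_ne_zero hQ k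
  have hm' := pow_sub_one_ne_zero_of_one_lt hQ m.add_one_ne_zero
  have hk' := pow_sub_one_ne_zero_of_one_lt hQ k.add_one_ne_zero
  field_simp
  ring

theorem gbinom_succ_add_eq :
    gbinom Q (m + 1 + k) (m + 1)
      = gbinom Q (m + (k + 1)) m * (Q ^ (k + 1) - 1) / (Q ^ (m + 1) - 1) := by
  rw [gbinom_add_eq_qFactorial_div hQ, gbinom_add_eq_qFactorial_div hQ,
    show m + 1 + k = m + (k + 1) by ring, qFactorial_succ Q m, qFactorial_succ Q k]
  have hm := qFactorial_ne_zero hQ m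
  have hk := qFactorial_ne_zero hQ k
  have hm' := pow_sub_one_ne_zero_of_one_lt hQ m.add_one_ne_zero
  have hk' := pow_sub_one_ne_zero_of_one_lt hQ k.add_one_ne_zero
  field_simp

end

def halfPlusMinus (x : ℚ) (m k : ℕ) : ℚ :=
  (x ^ m + 1) * (x ^ k - 1) / (2 * (x ^ (m + k) - 1)) * gbinom (x ^ 2) (m + k) m

def halfMinusPlus (x : ℚ) (m k : ℕ) : ℚ :=
  (x ^ m - 1) * (x ^ k + 1) / (2 * (x ^ (m + k) - 1)) * gbinom (x ^ 2) (m + k) m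

section
variable {x : ℚ} (hx : 1 < x) (m k : ℕ)
include hx

theorem halfPlusMinus_succ_succ :
    halfPlusMinus x (m + 1) (k + 1) = (x ^ 2) ^ (m + 1) * halfPlusMinus x (m + 1) k
      + ((1 + x ^ (m + 1)) / 2 * (1 + x ^ (k + 1)) - x ^ (k + 1)) * halfPlusMinus x m (k + 1)
      + (1 + x ^ (m + 1)) / 2 * (1 - x ^ (k + 1)) * halfMinusPlus x m (k + 1) := by
  have hQ : 1 < x ^ 2 := one_lt_pow₀ hx two_ne_zero
  simp only [halfPlusMinus, halfMinusPlus, gbinom_add_succ_succ hQ, gbinom_succ_add_eq hQ]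
  have hm := pow_sub_one_ne_zero_of_one_lt hQ m.add_one_ne_zero
  have hmk₂ := pow_sub_one_ne_zero_of_one_lt hx (n := m + 1 + (k + 1)) (by omega)
  have hmk₁ := pow_sub_one_ne_zero_of_one_lt hx (n := m + 1 + k) (by omega)
  have hmk₁' := pow_sub_one_ne_zero_of_one_lt hx (n := m + (k + 1)) (by omega)
  field_simp
  ring

theorem halfMinusPlus_succ_succ :
    halfMinusPlus x (m + 1) (k + 1) = (x ^ 2) ^ (m + 1) * halfMinusPlus x (m + 1) k
      + (1 - (1 + x ^ (m + 1)) / 2) * (1 + x ^ (k + 1)) * halfPlusMinus x m (k + 1)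
      + ((1 + x ^ (m + 1)) / 2 * (1 + x ^ (k + 1)) - x ^ (m + 1)) * halfMinusPlus x m (k + 1) := by
  have hQ : 1 < x ^ 2 := one_lt_pow₀ hx two_ne_zero
  simp only [halfPlusMinus, halfMinusPlus, gbinom_add_succ_succ hQ, gbinom_succ_add_eq hQ]
  have hm := pow_sub_one_ne_zero_of_one_lt hQ m.add_one_ne_zero
  have hmk₂ := pow_sub_one_ne_zero_of_one_lt hx (n := m + 1 + (k + 1)) (by omega)
  have hmk₁ := pow_sub_one_ne_zero_of_one_lt hx (n := m + 1 + k) (by omega)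
  have hmk₁' := pow_sub_one_ne_zero_of_one_lt hx (n := m + (k + 1)) (by omega)
  field_simp
  ring

end

theorem one_add_pow_div_two_mem_bot {x : ℕ} (hodd : Odd x) (n : ℕ) :
    (1 + (x : ℚ) ^ n) / 2 ∈ (⊥ : Subring ℚ) := by
  obtain ⟨r, hr⟩ := hodd.pow (n := n)
  refine Subring.mem_bot.mpr ⟨r + 1, ?_⟩
  rw [← Nat.cast_pow, hr]
  push_cast
  ring

theorem halfPlusMinus_mem_bot_and_halfMinusPlus_mem_bot {x : ℕ} (hodd : Odd x) (hx : 1 < x)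
    (m k : ℕ) :
    halfPlusMinus x m k ∈ (⊥ : Subring ℚ) ∧
      halfMinusPlus x m k ∈ (⊥ : Subring ℚ) := by
  have hx' : (1 : ℚ) < x := by exact_mod_cast hx
  induction m generalizing k with
  | zero =>
    rcases eq_or_ne ((x : ℚ) ^ k - 1) 0 with h | h
    · simp [halfPlusMinus, halfMinusPlus, h]
    · simp [halfPlusMinus, halfMinusPlus, gbinom, one_add_one_eq_two, h]
  | succ m ihm =>
    induction k with
    | zero =>
      have hQ : 1 < (x : ℚ) ^ 2 := one_lt_pow₀ hx' two_ne_zero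
      have := pow_sub_one_ne_zero_of_one_lt hx' m.add_one_ne_zero
      simp [halfPlusMinus, halfMinusPlus, gbinom_self hQ, one_add_one_eq_two,
        mul_comm _ (2 : ℚ), this]
    | succ k ihk =>
      obtain ⟨hA₁, hB₁⟩ := ihm (k + 1)
      obtain ⟨hA₂, hB₂⟩ := ihk
      have hh := one_add_pow_div_two_mem_bot hodd (m + 1)
      have hxb : (x : ℚ) ∈ (⊥ : Subring ℚ) := natCast_mem _ x
      rw [halfPlusMinus_succ_succ hx', halfMinusPlus_succ_succ hx']
      constructor <;> apply_rules [add_mem, sub_mem, mul_mem, pow_mem, one_mem]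

theorem gaussian_binom_divisibility_one_mod_four_general
    (q lam mu : ℕ) (hq : IsPrimePow q) (hqodd : Odd q)
    (hle : mu ≤ lam) :
    (∃ z : ℤ, ((q : ℚ) ^ mu + 1) * ((q : ℚ) ^ (lam - mu) - 1) / (2 * ((q : ℚ) ^ lam - 1)) *
      gbinom ((q : ℚ) ^ 2) lam mu = (z : ℚ)) ∧
    (∃ z : ℤ, ((q : ℚ) ^ mu - 1) * ((q : ℚ) ^ (lam - mu) + 1) / (2 * ((q : ℚ) ^ lam - 1)) *
      gbinom ((q : ℚ) ^ 2) lam mu = (z : ℚ)) := by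
  obtain ⟨k, rfl⟩ := Nat.exists_eq_add_of_le hle
  obtain ⟨hA, hB⟩ :=
    halfPlusMinus_mem_bot_and_halfMinusPlus_mem_bot hqodd hq.one_lt mu k
  obtain ⟨a, ha⟩ := Subring.mem_bot.mp hA
  obtain ⟨b, hb⟩ := Subring.mem_bot.mp hB
  rw [Nat.add_sub_cancel_left]
  exact ⟨⟨a, ha.symm⟩, ⟨b, hb.symm⟩⟩

/-- divisibility result for odd prime powers `q` with either
`q ≡ 3 (mod 4)` and `λ` even, or `q ≡ 1 (mod 4)`. -/
theorem gaussian_binom_divisibility_one_mod_four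
    (q lam mu : ℕ) (hq : IsPrimePow q) (hqodd : Odd q)
    (hlam0 : 0 < lam) (hmu0 : 0 < mu) (hle : mu ≤ lam)
    (hcase : (q % 4 = 3 ∧ Even lam) ∨ q % 4 = 1) :
    (∃ z : ℤ, ((q : ℚ) ^ mu + 1) * ((q : ℚ) ^ (lam - mu) - 1) / (2 * ((q : ℚ) ^ lam - 1)) *
      gbinom ((q : ℚ) ^ 2) lam mu = (z : ℚ)) ∧
    (∃ z : ℤ, ((q : ℚ) ^ mu - 1) * ((q : ℚ) ^ (lam - mu) + 1) / (2 * ((q : ℚ) ^ lam - 1)) *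
      gbinom ((q : ℚ) ^ 2) lam mu = (z : ℚ)) :=
  gaussian_binom_divisibility_one_mod_four_general q lam mu hq hqodd hle
end

section
/- Let E be a finite field with |E| = Q, let r ≥ 2 be an integer, let V and W be r-dimensional E-vector spaces, and let B : V × W → E be a non-degenerate bilinear pairing (i.e., B(v,·) ≡ 0 implies v = 0 and B(·,w) ≡ 0 implies w = 0). Then the number of quadruples (v, w, v′, w′) with v, v′ ∈ V \ {0} and w, w′ ∈ W \ {0} satisfying B(v,w) = 0, B(v′,w′) = 0, B(v,w′) = 1 and B(v′,w) = 1 equals Q^{2r−3} (Q^{r−1} − 1)(Q^r − 1). -/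
/-!
Count the quadruples `(v, w, v', w')` in the order `v, w', v', w`. There are `Q ^ r - 1` choices
of `v ≠ 0`; by non-degeneracy `B v` is a nonzero functional, so `w'` ranges over one of its fibres,
`Q ^ (r - 1)` choices; `v'` is a nonzero vector of the hyperplane `ker (B · w')`,
`Q ^ (r - 1) - 1` choices; and `w` lies in a fibre of `B v'` restricted to the hyperplane
`ker (B v)`. That restriction is nonzero because `W = ker (B v) ⊕ E w'` and `B v' w' = 0`, which
leaves `Q ^ (r - 2)` choices.
-/

open Module LinearMap

lemma Nat.card_sigma_of_card_eq {ι : Type*} [Finite ι] {β : ι → Type*} [∀ i, Finite (β i)]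
    {n : ℕ} (h : ∀ i, Nat.card (β i) = n) : Nat.card (Σ i, β i) = Nat.card ι * n := by
  have := Fintype.ofFinite ι
  simp [Nat.card_sigma, h, Nat.card_eq_fintype_card]

lemma Nat.card_subtype_ne {α : Type*} [Finite α] (a : α) :
    Nat.card {x : α // x ≠ a} = Nat.card α - 1 := by
  classical
  have := Fintype.ofFinite α
  simp only [Nat.card_eq_fintype_card, Fintype.card_subtype_compl, Fintype.card_subtype_eq]

lemma Module.Dual.domRestrict_ker_ne_zero {R M : Type*} [CommRing R] [AddCommGroup M]
    [Module R M] {f g : Dual R M} {x : M} (hfx : f x = 1) (hgx : g x = 0) (hg : g ≠ 0) :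
    g.domRestrict (ker f) ≠ 0 := by
  refine fun h ↦ hg (LinearMap.ext fun y ↦ ?_)
  have hy : y - f y • x ∈ ker f := by simp [hfx]
  simpa [hgx] using congr($h ⟨_, hy⟩)

section FiniteField

variable {E M : Type*} [Field E] [Fintype E] [AddCommGroup M] [Module E M] [FiniteDimensional E M]

lemma Module.natCard_subtype_ne_zero :
    Nat.card {x : M // x ≠ 0} = Fintype.card E ^ finrank E M - 1 := by
  have := Module.finite_of_finite E (M := M)
  rw [Nat.card_subtype_ne, Module.natCard_eq_pow_finrank (K := E), Nat.card_eq_fintype_card]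

lemma Module.Dual.natCard_fiber_of_ne_zero {f : Dual E M} (hf : f ≠ 0) (c : E) :
    Nat.card {x : M // f x = c} = Fintype.card E ^ (finrank E M - 1) := by
  have hfiber : Nat.card {x : M // f x = c} = Nat.card (ker f) :=
    Nat.card_congr <| AddMonoidHom.fiberEquivKerOfSurjective (f := f.toAddMonoidHom)
      (LinearMap.surjective hf) c
  rw [hfiber, Module.natCard_eq_pow_finrank (K := E), Nat.card_eq_fintype_card,
    ← Module.Dual.finrank_ker_add_one_of_ne_zero hf, Nat.add_sub_cancel]

end FiniteField

namespace LinearMap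

section Equiv

variable {R V W : Type*} [CommRing R] [Nontrivial R] [AddCommGroup V] [Module R V]
  [AddCommGroup W] [Module R W] (B : V →ₗ[R] W →ₗ[R] R)

def hyperbolicPairsEquivSigma :
    {x : V × W × V × W //
        x.1 ≠ 0 ∧ x.2.1 ≠ 0 ∧ x.2.2.1 ≠ 0 ∧ x.2.2.2 ≠ 0 ∧
        B x.1 x.2.1 = 0 ∧ B x.2.2.1 x.2.2.2 = 0 ∧
        B x.1 x.2.2.2 = 1 ∧ B x.2.2.1 x.2.1 = 1} ≃
      Σ (v : {v : V // v ≠ 0}) (w' : {w' : W // B v w' = 1})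
        (v' : {v' : V // B v' w' = 0 ∧ v' ≠ 0}), {w : W // B v w = 0 ∧ B v' w = 1} where
  toFun := fun ⟨(v, w, v', w'), hv, _, hv', _, hvw, hv'w', hvw', hv'w⟩ ↦
    ⟨⟨v, hv⟩, ⟨w', hvw'⟩, ⟨v', hv'w', hv'⟩, ⟨w, hvw, hv'w⟩⟩
  invFun := fun ⟨⟨v, hv⟩, ⟨w', hvw'⟩, ⟨v', hv'w', hv'⟩, ⟨w, hvw, hv'w⟩⟩ ↦
    ⟨(v, w, v', w'), hv, ne_zero_of_map (f := B v') (hv'w ▸ one_ne_zero), hv',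
      ne_zero_of_map (f := B v) (hvw' ▸ one_ne_zero), hvw, hv'w', hvw', hv'w⟩
  left_inv := fun ⟨(_, _, _, _), _, _, _, _, _, _, _, _⟩ ↦ rfl
  right_inv := fun ⟨⟨_, _⟩, ⟨_, _⟩, ⟨_, _, _⟩, ⟨_, _, _⟩⟩ ↦ rfl

end Equiv

variable {E V W : Type*} [Field E] [Fintype E] [AddCommGroup V] [Module E V]
  [AddCommGroup W] [Module E W] {B : V →ₗ[E] W →ₗ[E] E}

lemma natCard_apply_eq_zero_and_ne_zero [FiniteDimensional E V] {v : V} {w' : W}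
    (h : B v w' = 1) :
    Nat.card {v' : V // B v' w' = 0 ∧ v' ≠ 0} = Fintype.card E ^ (finrank E V - 1) - 1 := by
  have hflip : B.flip w' ≠ 0 := fun h0 ↦ one_ne_zero (h.symm.trans congr($h0 v))
  rw [← Module.Dual.finrank_ker_add_one_of_ne_zero hflip, Nat.add_sub_cancel,
    ← Module.natCard_subtype_ne_zero (M := ker (B.flip w'))]
  exact Nat.card_congr <|
    (Equiv.subtypeSubtypeEquivSubtypeInter (· ∈ ker (B.flip w')) (· ≠ 0)).symm.trans
      (Equiv.subtypeEquivRight fun _ ↦ by simp)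

lemma natCard_apply_eq_zero_and_apply_eq_one [FiniteDimensional E W] {v v' : V} {w' : W}
    (h₁ : B v w' = 1) (h₀ : B v' w' = 0) (hv' : B v' ≠ 0) :
    Nat.card {w : W // B v w = 0 ∧ B v' w = 1} = Fintype.card E ^ (finrank E W - 2) := by
  have hv : B v ≠ 0 := fun h0 ↦ one_ne_zero (h₁.symm.trans congr($h0 w'))
  have hrestrict := Module.Dual.domRestrict_ker_ne_zero h₁ h₀ hv'
  have hker : Nat.card {w : W // B v w = 0 ∧ B v' w = 1} =
      Nat.card {u : ker (B v) // (B v').domRestrict (ker (B v)) u = 1} :=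
    Nat.card_congr (Equiv.subtypeSubtypeEquivSubtypeInter (· ∈ ker (B v)) (B v' · = 1)).symm
  rw [hker, Module.Dual.natCard_fiber_of_ne_zero hrestrict,
    ← Module.Dual.finrank_ker_add_one_of_ne_zero hv]
  rfl

end LinearMap

theorem count_hyperbolic_pairs_bilinear_pairing_general
    (Q r : ℕ)
    (E : Type) [Field E] [Fintype E] (hE : Fintype.card E = Q)
    (V W : Type) [AddCommGroup V] [Module E V] [AddCommGroup W] [Module E W]
    [FiniteDimensional E V] [FiniteDimensional E W]
    (hV : Module.finrank E V = r) (hW : Module.finrank E W = r)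
    (B : V →ₗ[E] W →ₗ[E] E)
    (hnd1 : ∀ v : V, (∀ w : W, B v w = 0) → v = 0) :
    (Nat.card {x : V × W × V × W //
        x.1 ≠ 0 ∧ x.2.1 ≠ 0 ∧ x.2.2.1 ≠ 0 ∧ x.2.2.2 ≠ 0 ∧
        B x.1 x.2.1 = 0 ∧ B x.2.2.1 x.2.2.2 = 0 ∧
        B x.1 x.2.2.2 = 1 ∧ B x.2.2.1 x.2.1 = 1} : ℚ) =
      (Q : ℚ) ^ (2 * r - 3) * ((Q : ℚ) ^ (r - 1) - 1) * ((Q : ℚ) ^ r - 1) := by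
  have := Module.finite_of_finite E (M := V)
  have := Module.finite_of_finite E (M := W)
  have hBv : ∀ v : V, v ≠ 0 → B v ≠ 0 := fun v hv h ↦ hv (hnd1 v fun w ↦ by simp [h])
  rw [Nat.card_congr B.hyperbolicPairsEquivSigma,
    Nat.card_sigma_of_card_eq (n := Q ^ (r - 1) * ((Q ^ (r - 1) - 1) * Q ^ (r - 2))) fun v ↦ ?_,
    Module.natCard_subtype_ne_zero (E := E), hE, hV]
  · push_cast [Nat.one_le_pow _ _ (hE ▸ Fintype.card_pos : 0 < Q)]
    rcases Nat.lt_or_ge r 2 with hr | hr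
    · simp [Nat.sub_eq_zero_of_le (Nat.le_of_lt_succ hr)]
    · rw [show 2 * r - 3 = (r - 1) + (r - 2) by omega, pow_add]
      ring
  rw [Nat.card_sigma_of_card_eq (n := (Q ^ (r - 1) - 1) * Q ^ (r - 2)) fun w' ↦ ?_,
    Module.Dual.natCard_fiber_of_ne_zero (hBv v v.2), hE, hW]
  rw [Nat.card_sigma_of_card_eq fun v' ↦ ?_, natCard_apply_eq_zero_and_ne_zero w'.2, hE, hV]
  rw [natCard_apply_eq_zero_and_apply_eq_one w'.2 v'.2.1 (hBv v' v'.2.2), hE, hW]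

/-- number of hyperbolic pairs for a non-degenerate bilinear pairing
between two `r`-dimensional spaces over a finite field with `Q` elements. -/
theorem count_hyperbolic_pairs_bilinear_pairing
    (Q r : ℕ) (hr : 2 ≤ r)
    (E : Type) [Field E] [Fintype E] (hE : Fintype.card E = Q)
    (V W : Type) [AddCommGroup V] [Module E V] [AddCommGroup W] [Module E W]
    [FiniteDimensional E V] [FiniteDimensional E W]
    (hV : Module.finrank E V = r) (hW : Module.finrank E W = r)
    (B : V →ₗ[E] W →ₗ[E] E)
    (hnd1 : ∀ v : V, (∀ w : W, B v w = 0) → v = 0)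
    (hnd2 : ∀ w : W, (∀ v : V, B v w = 0) → w = 0) :
    (Nat.card {x : V × W × V × W //
        x.1 ≠ 0 ∧ x.2.1 ≠ 0 ∧ x.2.2.1 ≠ 0 ∧ x.2.2.2 ≠ 0 ∧
        B x.1 x.2.1 = 0 ∧ B x.2.2.1 x.2.2.2 = 0 ∧
        B x.1 x.2.2.2 = 1 ∧ B x.2.2.1 x.2.1 = 1} : ℚ) =
      (Q : ℚ) ^ (2 * r - 3) * ((Q : ℚ) ^ (r - 1) - 1) * ((Q : ℚ) ^ r - 1) :=
  count_hyperbolic_pairs_bilinear_pairing_general Q r E hE V W hV hW B hnd1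
end
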